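/- (Theorem 3.3) Let ω ∈ (0,1) and let K be an n×n real matrix that is diagonalizable with negative spectrum, i.e. K = QΓQ⁻¹ for some invertible real matrix Q and real diagonal matrix Γ all of whose diagonal entries are negative. Set A := I_{mn} − (Iinv·D) ⊗ K and P(ω) := I_{mn} − (S(ω)·D) ⊗ K, where ⊗ is the Kronecker product. Then P(ω) is invertible, the polynomial (X − 1)^{n(m−1)} divides the characteristic polynomial of P(ω)⁻¹A, and every complex eigenvalue of P(ω)⁻¹A is a real number lying in the interval [1, 1/(1−ω)). -/
import Mathlib


open Matrix

/-- The sinc integrand `sin(πt)/(πt)`, extended by the value 1 at `t = 0`. -/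
noncomputable def sincFn (t : ℝ) : ℝ :=
  if t = 0 then 1 else Real.sin (Real.pi * t) / (Real.pi * t)

/-- The `m × m` Toeplitz matrix `Iinv(k,l) = 1/2 + ∫₀^{k-l} sin(πt)/(πt) dt`. -/
noncomputable def IinvMat (m : ℕ) : Matrix (Fin m) (Fin m) ℝ :=
  fun k l => 1 / 2 + ∫ t in (0 : ℝ)..((k : ℝ) - (l : ℝ)), sincFn t

/-- The skew-symmetric part `S = (Iinv - Iinvᵀ)/2`. -/
noncomputable def Smat (m : ℕ) : Matrix (Fin m) (Fin m) ℝ :=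
  (2 : ℝ)⁻¹ • (IinvMat m - (IinvMat m)ᵀ)

/-- The all-ones vector `e ∈ ℝ^m`. -/
def eVec (m : ℕ) : Fin m → ℝ := fun _ => 1

lemma sincFn_even (t : ℝ) : sincFn (-t) = sincFn t := by
  unfold sincFn
  rcases eq_or_ne t 0 with h | h
  · simp [h]
  · rw [if_neg (neg_ne_zero.mpr h), if_neg h]
    rw [mul_neg, Real.sin_neg, neg_div_neg_eq]

lemma integral_sinc_neg (a : ℝ) :
    (∫ t in (0:ℝ)..(-a), sincFn t) = -∫ t in (0:ℝ)..a, sincFn t := by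
  have h := intervalIntegral.integral_comp_neg (a := (0:ℝ)) (b := a) (f := sincFn)
  simp only [sincFn_even, neg_zero] at h
  rw [h, intervalIntegral.integral_symm]

lemma Iinv_add (m : ℕ) (k l : Fin m) : IinvMat m k l + IinvMat m l k = 1 := by
  unfold IinvMat
  have : ((l : ℝ) - (k : ℝ)) = -((k : ℝ) - (l : ℝ)) := by ring
  rw [this, integral_sinc_neg]
  ring


noncomputable def SomMat (m : ℕ) (ω : ℝ) : Matrix (Fin m) (Fin m) ℝ :=
  IinvMat m - (ω / 2) • Matrix.vecMulVec (eVec m) (eVec m)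

lemma SomMat_apply (m : ℕ) (ω : ℝ) (k l : Fin m) :
    SomMat m ω k l = IinvMat m k l - ω / 2 := by
  simp [SomMat, Matrix.vecMulVec_apply, eVec, Matrix.sub_apply]

lemma SomMat_add_symm (m : ℕ) (ω : ℝ) (k l : Fin m) :
    SomMat m ω k l + SomMat m ω l k = 1 - ω := by
  have := Iinv_add m k l
  rw [SomMat_apply, SomMat_apply]; linarith

lemma quadform (m : ℕ) (ω : ℝ) (w : Fin m → ℝ) :
    ∑ k, ∑ l, w k * SomMat m ω k l * w l = ((1 - ω) / 2) * (∑ k, w k) ^ 2 := by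
  have hswap : ∑ k, ∑ l, w k * SomMat m ω k l * w l
      = ∑ k, ∑ l, w l * SomMat m ω l k * w k := by rw [Finset.sum_comm]
  have h2 : (∑ k, ∑ l, w k * SomMat m ω k l * w l) + (∑ k, ∑ l, w k * SomMat m ω k l * w l)
      = (1 - ω) * (∑ k, w k) ^ 2 := by
    nth_rewrite 2 [hswap]
    have : (∑ k, ∑ l, w k * SomMat m ω k l * w l) + (∑ k, ∑ l, w l * SomMat m ω l k * w k)
        = ∑ k, ∑ l, (w k * w l) * (SomMat m ω k l + SomMat m ω l k) := by
      rw [← Finset.sum_add_distrib]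
      refine Finset.sum_congr rfl fun k _ => ?_
      rw [← Finset.sum_add_distrib]
      refine Finset.sum_congr rfl fun l _ => by ring
    rw [this]
    have : ∑ k, ∑ l, (w k * w l) * (SomMat m ω k l + SomMat m ω l k)
        = ∑ k, ∑ l, (w k * w l) * (1 - ω) := by
      refine Finset.sum_congr rfl fun k _ => Finset.sum_congr rfl fun l _ => by
        rw [SomMat_add_symm]
    rw [this, sq, Finset.sum_mul_sum, Finset.mul_sum]
    exact Finset.sum_congr rfl fun k _ => by
      rw [Finset.mul_sum]; exact Finset.sum_congr rfl fun l _ => by ring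
  linarith

lemma inj_aux (m : ℕ) (ω : ℝ) (hω : ω ∈ Set.Ioo (0:ℝ) 1) (d : Fin m → ℝ) (hd : ∀ j, 0 < d j)
    (γ : ℝ) (hγ : γ < 0) (y : Fin m → ℂ)
    (h : ∀ k, y k = (γ : ℂ) * ∑ l, (SomMat m ω k l : ℂ) * ((d l : ℂ) * y l)) : y = 0 := by
  have hω1 : ω < 1 := hω.2
  set c := (starRingEnd ℂ) with hc
  set w : Fin m → ℂ := fun k => (d k : ℂ) * y k with hw
  have hconj : ∀ k, c (y k) = (γ : ℂ) * ∑ l, (SomMat m ω k l : ℂ) * ((d l : ℂ) * c (y l)) := by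
    intro k
    calc c (y k) = c ((γ : ℂ) * ∑ l, (SomMat m ω k l : ℂ) * ((d l : ℂ) * y l)) := by rw [← h k]
    _ = _ := by simp [hc, _root_.map_mul, map_sum, Complex.conj_ofReal]
  have T1 : ∑ k, (d k : ℂ) * (c (y k) * y k)
      = (γ : ℂ) * ∑ k, ∑ l, (SomMat m ω k l : ℂ) * (c (w l) * w k) := by
    rw [Finset.mul_sum]
    refine Finset.sum_congr rfl fun k _ => ?_
    rw [hconj k]
    simp only [Finset.mul_sum, Finset.sum_mul]
    refine Finset.sum_congr rfl fun l _ => ?_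
    simp only [hw, hc, _root_.map_mul, Complex.conj_ofReal]
    ring
  have T2 : ∑ k, (d k : ℂ) * (c (y k) * y k)
      = (γ : ℂ) * ∑ k, ∑ l, (SomMat m ω k l : ℂ) * (c (w k) * w l) := by
    rw [Finset.mul_sum]
    refine Finset.sum_congr rfl fun k _ => ?_
    nth_rewrite 2 [h k]
    simp only [Finset.mul_sum, Finset.sum_mul]
    refine Finset.sum_congr rfl fun l _ => ?_
    simp only [hw, hc, _root_.map_mul, Complex.conj_ofReal]
    ring
  have hswap : ∑ k, ∑ l, (SomMat m ω k l : ℂ) * (c (w l) * w k)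
      = ∑ k, ∑ l, (SomMat m ω l k : ℂ) * (c (w k) * w l) := by rw [Finset.sum_comm]
  have h2T : (2 : ℂ) * ∑ k, (d k : ℂ) * (c (y k) * y k)
      = (γ : ℂ) * ∑ k, ∑ l, ((SomMat m ω k l : ℂ) + (SomMat m ω l k : ℂ)) * (c (w k) * w l) := by
    rw [two_mul]
    nth_rewrite 1 [T1]
    nth_rewrite 1 [T2]
    rw [hswap, ← mul_add, ← Finset.sum_add_distrib]
    congr 1
    refine Finset.sum_congr rfl fun k _ => ?_
    rw [← Finset.sum_add_distrib]
    exact Finset.sum_congr rfl fun l _ => by ring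
  have h3 : ∑ k, ∑ l, ((SomMat m ω k l : ℂ) + (SomMat m ω l k : ℂ)) * (c (w k) * w l)
      = ((1 - ω : ℝ) : ℂ) * (c (∑ k, w k) * ∑ k, w k) := by
    have hs : c (∑ k, w k) * ∑ k, w k = ∑ k, ∑ l, c (w k) * w l := by
      rw [map_sum, Finset.sum_mul_sum]
    rw [hs]
    simp only [Finset.mul_sum]
    refine Finset.sum_congr rfl fun k _ => Finset.sum_congr rfl fun l _ => ?_
    rw [← Complex.ofReal_add, SomMat_add_symm]
  have hkey : (2 : ℂ) * ∑ k, (d k : ℂ) * (c (y k) * y k)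
      = (γ : ℂ) * (((1 - ω : ℝ) : ℂ) * (c (∑ k, w k) * ∑ k, w k)) := by
    rw [h2T, h3]
  -- convert to real
  have hTre : ∑ k, (d k : ℂ) * (c (y k) * y k) = ((∑ k, d k * Complex.normSq (y k) : ℝ) : ℂ) := by
    rw [Complex.ofReal_sum]
    refine Finset.sum_congr rfl fun k _ => ?_
    rw [hc, ← Complex.normSq_eq_conj_mul_self, Complex.ofReal_mul]
  have hwre : c (∑ k, w k) * ∑ k, w k = ((Complex.normSq (∑ k, w k) : ℝ) : ℂ) := by
    rw [hc, ← Complex.normSq_eq_conj_mul_self]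
  rw [hTre, hwre] at hkey
  have hreal : 2 * (∑ k, d k * Complex.normSq (y k)) = γ * ((1 - ω) * Complex.normSq (∑ k, w k)) := by
    exact_mod_cast hkey
  have hnn : ∀ k ∈ Finset.univ, 0 ≤ d k * Complex.normSq (y k) :=
    fun k _ => mul_nonneg (hd k).le (Complex.normSq_nonneg _)
  have hle : (∑ k, d k * Complex.normSq (y k)) ≤ 0 := by
    nlinarith [Complex.normSq_nonneg (∑ k, w k),
      mul_nonneg (sub_nonneg.mpr hω1.le) (Complex.normSq_nonneg (∑ k, w k))]
  have hzero : ∀ k ∈ Finset.univ, d k * Complex.normSq (y k) = 0 := by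
    rw [← Finset.sum_eq_zero_iff_of_nonneg hnn]
    exact le_antisymm hle (Finset.sum_nonneg hnn)
  funext k
  have := hzero k (Finset.mem_univ k)
  have h0 : Complex.normSq (y k) = 0 := by
    rcases mul_eq_zero.mp this with h' | h'
    · exact absurd h' (ne_of_gt (hd k))
    · exact h'
  exact Complex.normSq_eq_zero.mp h0

lemma Rdet_ne (m : ℕ) (ω : ℝ) (hω : ω ∈ Set.Ioo (0:ℝ) 1) (d : Fin m → ℝ) (hd : ∀ j, 0 < d j)
    (γ : ℝ) (hγ : γ < 0) :
    ((1 : Matrix (Fin m) (Fin m) ℝ) - γ • (SomMat m ω * Matrix.diagonal d)).det ≠ 0 := by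
  intro h0
  obtain ⟨v, hv, hmv⟩ := Matrix.exists_mulVec_eq_zero_iff.mpr h0
  have hpt : ∀ k, v k = γ * ∑ l, SomMat m ω k l * (d l * v l) := by
    intro k
    have h1 := congrFun hmv k
    simp only [Matrix.mulVec, dotProduct, Matrix.sub_apply, Matrix.smul_apply,
      Matrix.one_apply, Matrix.mul_diagonal, smul_eq_mul, sub_mul, ite_mul, one_mul, zero_mul,
      Finset.sum_sub_distrib, Finset.sum_ite_eq, Finset.mem_univ, if_true,
      Pi.zero_apply] at h1
    have h2 : v k = ∑ l, γ * (SomMat m ω k l * d l) * v l := by linarith [h1]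
    rw [h2, Finset.mul_sum]
    exact Finset.sum_congr rfl fun l _ => by ring
  have hy : (fun k => ((v k : ℝ) : ℂ)) = 0 := by
    refine inj_aux m ω hω d hd γ hγ _ fun k => ?_
    have := hpt k
    push_cast
    exact_mod_cast congrArg (Complex.ofReal) this
  apply hv
  funext k
  have h3 := congrFun hy k
  simp only [Pi.zero_apply] at h3 ⊢
  exact_mod_cast h3

lemma exists_u (m : ℕ) (ω : ℝ) (hω : ω ∈ Set.Ioo (0:ℝ) 1) (d : Fin m → ℝ) (hd : ∀ j, 0 < d j)
    (γ : ℝ) (hγ : γ < 0) :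
    ∃ u : Fin m → ℝ, ∀ k, u k - γ * ∑ l, SomMat m ω k l * (d l * u l) = 1 := by
  set R := (1 : Matrix (Fin m) (Fin m) ℝ) - γ • (SomMat m ω * Matrix.diagonal d) with hR
  have hdet : IsUnit R.det := isUnit_iff_ne_zero.mpr (Rdet_ne m ω hω d hd γ hγ)
  refine ⟨R⁻¹.mulVec (fun _ => 1), fun k => ?_⟩
  have h1 : R.mulVec (R⁻¹.mulVec (fun _ => 1)) = (fun _ => (1:ℝ)) := by
    rw [Matrix.mulVec_mulVec, Matrix.mul_nonsing_inv _ hdet, Matrix.one_mulVec]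
  have h2 := congrFun h1 k
  set u := R⁻¹.mulVec (fun _ => (1:ℝ))
  simp only [hR, Matrix.mulVec, dotProduct, Matrix.sub_apply, Matrix.smul_apply,
    Matrix.one_apply, Matrix.mul_diagonal, smul_eq_mul, sub_mul, ite_mul, one_mul, zero_mul,
    Finset.sum_sub_distrib, Finset.sum_ite_eq, Finset.mem_univ, if_true] at h2
  rw [← h2, Finset.mul_sum]
  congr 1
  exact Finset.sum_congr rfl fun l _ => by ring

lemma tau_bounds (m : ℕ) (hm : 1 ≤ m) (ω : ℝ) (hω : ω ∈ Set.Ioo (0:ℝ) 1)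
    (d : Fin m → ℝ) (hd : ∀ j, 0 < d j) (γ : ℝ) (hγ : γ < 0)
    (u : Fin m → ℝ) (hu : ∀ k, u k - γ * ∑ l, SomMat m ω k l * (d l * u l) = 1) :
    0 < (∑ l, d l * u l) ∧ -γ * ((1 - ω) / 2) * (∑ l, d l * u l) < 1 := by
  set τ := ∑ l, d l * u l with hτ
  set q := ∑ k, d k * u k ^ 2 with hq
  -- τ = q - γ * ((1-ω)/2) * τ^2
  have hmul : ∀ k, d k * u k * u k - γ * (d k * u k * ∑ l, SomMat m ω k l * (d l * u l))
      = d k * u k := by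
    intro k
    linear_combination (d k * u k) * hu k
  have hsum : q - γ * ∑ k, (d k * u k) * ∑ l, SomMat m ω k l * (d l * u l) = τ := by
    rw [hq, hτ, Finset.mul_sum, ← Finset.sum_sub_distrib]
    refine Finset.sum_congr rfl fun k _ => ?_
    linear_combination hmul k
  have hquad : ∑ k, (d k * u k) * ∑ l, SomMat m ω k l * (d l * u l)
      = ((1 - ω) / 2) * τ ^ 2 := by
    have := quadform m ω (fun k => d k * u k)
    rw [← this]
    refine Finset.sum_congr rfl fun k _ => ?_
    rw [Finset.mul_sum]
    exact Finset.sum_congr rfl fun l _ => by ring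
  have htq : τ = q - γ * (((1 - ω) / 2) * τ ^ 2) := by
    rw [← hquad]; linarith [hsum]
  have hq0 : 0 < q := by
    have hne : ¬(∀ k, u k = 0) := by
      intro hall
      have h1 := hu ⟨0, hm⟩
      simp [hall] at h1
    push_neg at hne
    obtain ⟨k, hk⟩ := hne
    rw [hq]
    refine Finset.sum_pos' (fun i _ => mul_nonneg (hd i).le (sq_nonneg _)) ?_
    exact ⟨k, Finset.mem_univ k, mul_pos (hd k) (by positivity)⟩
  have hτpos : 0 < τ := by
    nlinarith [mul_nonneg (mul_nonneg (neg_nonneg.mpr hγ.le)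
      (by linarith [hω.2.le] : (0:ℝ) ≤ (1 - ω) / 2)) (sq_nonneg τ)]
  refine ⟨hτpos, ?_⟩
  nlinarith [hτpos, htq, hq0]

lemma block_reduce (m n : ℕ) (K Q : Matrix (Fin n) (Fin n) ℝ) (Γ : Fin n → ℝ)
    (hQ : IsUnit Q) (hK : K = Q * Matrix.diagonal Γ * Q⁻¹)
    (M₁ M₂ : Matrix (Fin m) (Fin m) ℝ) (a b : ℂ) (ξ : Fin m × Fin n → ℂ) (hξ : ξ ≠ 0)
    (h : ∀ k i, a * ξ (k,i) - ∑ l, ∑ j, (M₁ k l : ℂ) * (K i j : ℂ) * ξ (l,j)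
        = b * (ξ (k,i) - ∑ l, ∑ j, (M₂ k l : ℂ) * (K i j : ℂ) * ξ (l,j))) :
    ∃ (j : Fin n) (x : Fin m → ℂ), x ≠ 0 ∧ ∀ k,
      a * x k - (Γ j : ℂ) * ∑ l, (M₁ k l : ℂ) * x l
        = b * (x k - (Γ j : ℂ) * ∑ l, (M₂ k l : ℂ) * x l) := by
  have hQdet : IsUnit Q.det := (Matrix.isUnit_iff_isUnit_det Q).mp hQ
  set R₀ := Q⁻¹ with hR₀
  have hQR : Q * R₀ = 1 := Matrix.mul_nonsing_inv Q hQdet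
  have hRQ : R₀ * Q = 1 := Matrix.nonsing_inv_mul Q hQdet
  have hcomm : R₀ * K = Matrix.diagonal Γ * R₀ := by
    rw [hK, ← Matrix.mul_assoc, ← Matrix.mul_assoc, hRQ, Matrix.one_mul]
  have hcommpt : ∀ j r, ∑ i, (R₀ j i : ℂ) * (K i r : ℂ) = (Γ j : ℂ) * (R₀ j r : ℂ) := by
    intro j r
    have h1 := congrFun (congrFun hcomm j) r
    rw [Matrix.mul_apply, Matrix.diagonal_mul] at h1
    exact_mod_cast congrArg (Complex.ofReal) h1
  set η : Fin m → Fin n → ℂ := fun k j => ∑ i, (R₀ j i : ℂ) * ξ (k,i) with hη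
  have hrec : ∀ k i, ξ (k,i) = ∑ j, (Q i j : ℂ) * η k j := by
    intro k i
    have h1 : ∑ j, (Q i j : ℂ) * η k j
        = ∑ r, (∑ j, (Q i j : ℂ) * (R₀ j r : ℂ)) * ξ (k,r) := by
      simp only [hη, Finset.mul_sum, Finset.sum_mul]
      rw [Finset.sum_comm]
      exact Finset.sum_congr rfl fun r _ => Finset.sum_congr rfl fun j _ => by ring
    have h2 : ∀ r, (∑ j, (Q i j : ℂ) * (R₀ j r : ℂ)) = (((Q * R₀) i r : ℝ) : ℂ) := by
      intro r
      rw [Matrix.mul_apply]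
      push_cast
      rfl
    rw [h1]
    have h3 : ∀ r, (∑ j, (Q i j : ℂ) * (R₀ j r : ℂ)) * ξ (k,r)
        = (if i = r then (1:ℂ) else 0) * ξ (k,r) := by
      intro r
      rw [h2 r, hQR]
      congr 1
      simp [Matrix.one_apply, apply_ite (Complex.ofReal)]
    simp only [h3, ite_mul, one_mul, zero_mul, Finset.sum_ite_eq, Finset.mem_univ, if_true]
  have hηne : ∃ j, (fun k => η k j) ≠ 0 := by
    by_contra hall
    push_neg at hall
    apply hξ
    funext p
    obtain ⟨k, i⟩ := p
    rw [hrec k i]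
    have : ∀ j, η k j = 0 := fun j => congrFun (hall j) k
    simp [this]
  have key : ∀ (M : Matrix (Fin m) (Fin m) ℝ) (k : Fin m) (j : Fin n),
      ∑ i, (R₀ j i : ℂ) * (∑ l, ∑ r, (M k l : ℂ) * (K i r : ℂ) * ξ (l,r))
        = (Γ j : ℂ) * ∑ l, (M k l : ℂ) * η l j := by
    intro M k j
    have step1 : ∑ i, (R₀ j i : ℂ) * (∑ l, ∑ r, (M k l : ℂ) * (K i r : ℂ) * ξ (l,r))
        = ∑ l, ∑ r, (M k l : ℂ) * ((∑ i, (R₀ j i : ℂ) * (K i r : ℂ)) * ξ (l,r)) := by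
      simp only [Finset.mul_sum, Finset.sum_mul]
      rw [Finset.sum_comm]
      refine Finset.sum_congr rfl fun l _ => ?_
      rw [Finset.sum_comm]
      exact Finset.sum_congr rfl fun r _ => Finset.sum_congr rfl fun i _ => by ring
    rw [step1]
    simp only [hcommpt]
    simp only [hη, Finset.mul_sum]
    exact Finset.sum_congr rfl fun l _ => Finset.sum_congr rfl fun r _ => by ring
  obtain ⟨j, hj⟩ := hηne
  refine ⟨j, fun k => η k j, hj, fun k => ?_⟩
  have hsum : ∑ i, (R₀ j i : ℂ)
        * (a * ξ (k,i) - ∑ l, ∑ r, (M₁ k l : ℂ) * (K i r : ℂ) * ξ (l,r))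
      = ∑ i, (R₀ j i : ℂ)
        * (b * (ξ (k,i) - ∑ l, ∑ r, (M₂ k l : ℂ) * (K i r : ℂ) * ξ (l,r))) :=
    Finset.sum_congr rfl fun i _ => by rw [h k i]
  have expand : ∀ (M : Matrix (Fin m) (Fin m) ℝ) (c : ℂ),
      ∑ i, (R₀ j i : ℂ)
          * (c * ξ (k,i) - ∑ l, ∑ r, (M k l : ℂ) * (K i r : ℂ) * ξ (l,r))
        = c * η k j - (Γ j : ℂ) * ∑ l, (M k l : ℂ) * η l j := by
    intro M c
    have : ∑ i, (R₀ j i : ℂ)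
          * (c * ξ (k,i) - ∑ l, ∑ r, (M k l : ℂ) * (K i r : ℂ) * ξ (l,r))
        = (∑ i, c * ((R₀ j i : ℂ) * ξ (k,i)))
          - ∑ i, (R₀ j i : ℂ) * (∑ l, ∑ r, (M k l : ℂ) * (K i r : ℂ) * ξ (l,r)) := by
      rw [← Finset.sum_sub_distrib]
      exact Finset.sum_congr rfl fun i _ => by ring
    rw [this, key M k j, ← Finset.mul_sum]
  have e1 := expand M₁ a
  have e2 := expand M₂ (1 : ℂ)
  rw [e1] at hsum
  have e2' : ∑ i, (R₀ j i : ℂ)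
        * (b * (ξ (k,i) - ∑ l, ∑ r, (M₂ k l : ℂ) * (K i r : ℂ) * ξ (l,r)))
      = b * (η k j - (Γ j : ℂ) * ∑ l, (M₂ k l : ℂ) * η l j) := by
    calc ∑ i, (R₀ j i : ℂ)
        * (b * (ξ (k,i) - ∑ l, ∑ r, (M₂ k l : ℂ) * (K i r : ℂ) * ξ (l,r)))
        = b * ∑ i, (R₀ j i : ℂ)
            * (1 * ξ (k,i) - ∑ l, ∑ r, (M₂ k l : ℂ) * (K i r : ℂ) * ξ (l,r)) := by
          rw [Finset.mul_sum]
          exact Finset.sum_congr rfl fun i _ => by ring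
      _ = b * (η k j - (Γ j : ℂ) * ∑ l, (M₂ k l : ℂ) * η l j) := by rw [e2, one_mul]
  rw [e2'] at hsum
  exact hsum

lemma core_eig (m : ℕ) (hm : 1 ≤ m) (ω : ℝ) (hω : ω ∈ Set.Ioo (0:ℝ) 1)
    (d : Fin m → ℝ) (hd : ∀ j, 0 < d j) (γ : ℝ) (hγ : γ < 0)
    (lam : ℂ) (hlam : lam ≠ 1) (x : Fin m → ℂ) (hx : x ≠ 0)
    (h : ∀ k, x k - (γ:ℂ) * ∑ l, ((IinvMat m * Matrix.diagonal d) k l : ℂ) * x l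
        = lam * (x k - (γ:ℂ) * ∑ l, ((SomMat m ω * Matrix.diagonal d) k l : ℂ) * x l)) :
    lam.im = 0 ∧ lam.re ∈ Set.Ico (1:ℝ) (1/(1-ω)) := by
  have hω0 := hω.1
  have hω1 := hω.2
  set t := ∑ l, (d l : ℂ) * x l with ht
  have h1lam : (1 : ℂ) - lam ≠ 0 := sub_ne_zero.mpr (Ne.symm hlam)
  have hE2 : ∀ k, (1 - lam) * (x k - ↑γ * ∑ l, ((SomMat m ω * Matrix.diagonal d) k l : ℂ) * x l)
      = ↑γ * (↑ω/2) * t := by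
    intro k
    have h1 := h k
    have hsplit : ∑ l, ((IinvMat m * Matrix.diagonal d) k l : ℂ) * x l
        = (∑ l, ((SomMat m ω * Matrix.diagonal d) k l : ℂ) * x l) + (↑ω/2) * t := by
      rw [ht, Finset.mul_sum, ← Finset.sum_add_distrib]
      refine Finset.sum_congr rfl fun l _ => ?_
      rw [Matrix.mul_diagonal, Matrix.mul_diagonal, SomMat_apply]
      push_cast
      ring
    rw [hsplit] at h1
    linear_combination h1
  obtain ⟨u, hu⟩ := exists_u m ω hω d hd γ hγ
  have huC : ∀ k, (u k : ℂ)
      - ↑γ * ∑ l, ((SomMat m ω * Matrix.diagonal d) k l : ℂ) * (u l : ℂ) = 1 := by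
    intro k
    have hre : u k - γ * ∑ l, (SomMat m ω * Matrix.diagonal d) k l * u l = 1 := by
      have hs : ∑ l, (SomMat m ω * Matrix.diagonal d) k l * u l
          = ∑ l, SomMat m ω k l * (d l * u l) :=
        Finset.sum_congr rfl fun l _ => by rw [Matrix.mul_diagonal]; ring
      rw [hs]; exact hu k
    exact_mod_cast hre
  set β := ↑γ * (↑ω/2) * t * (1 - lam)⁻¹ with hβ
  have hxk : ∀ k, x k - ↑γ * ∑ l, ((SomMat m ω * Matrix.diagonal d) k l : ℂ) * x l = β := by
    intro k
    apply mul_left_cancel₀ h1lam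
    rw [hE2 k, hβ]
    field_simp
  have hker : (fun k => x k - β * u k) = 0 := by
    refine inj_aux m ω hω d hd γ hγ _ fun k => ?_
    have hs : ∑ l, (SomMat m ω k l : ℂ) * ((d l : ℂ) * (x l - β * u l))
        = (∑ l, ((SomMat m ω * Matrix.diagonal d) k l : ℂ) * x l)
          - β * ∑ l, ((SomMat m ω * Matrix.diagonal d) k l : ℂ) * (u l : ℂ) := by
      rw [Finset.mul_sum, ← Finset.sum_sub_distrib]
      refine Finset.sum_congr rfl fun l _ => ?_
      rw [Matrix.mul_diagonal]
      push_cast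
      ring
    have hx' := hxk k
    have hu' := huC k
    calc x k - β * u k
        = (x k - ↑γ * ∑ l, ((SomMat m ω * Matrix.diagonal d) k l : ℂ) * x l)
          - β * ((u k : ℂ) - ↑γ * ∑ l, ((SomMat m ω * Matrix.diagonal d) k l : ℂ) * (u l : ℂ))
          + ↑γ * ((∑ l, ((SomMat m ω * Matrix.diagonal d) k l : ℂ) * x l)
            - β * ∑ l, ((SomMat m ω * Matrix.diagonal d) k l : ℂ) * (u l : ℂ)) := by ring
      _ = ↑γ * ∑ l, (SomMat m ω k l : ℂ) * ((d l : ℂ) * (x l - β * u l)) := by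
          rw [hx', hu', hs]; ring
  have hxu : ∀ k, x k = β * u k := by
    intro k
    have := congrFun hker k
    simp only [Pi.zero_apply] at this
    exact sub_eq_zero.mp this
  have hβ0 : β ≠ 0 := by
    intro h0
    apply hx
    funext k
    rw [hxu k, h0, zero_mul]
    rfl
  set τ := ∑ l, d l * u l with hτ
  have htβ : t = β * (τ : ℂ) := by
    rw [ht, hτ]
    push_cast
    rw [Finset.mul_sum]
    exact Finset.sum_congr rfl fun l _ => by rw [hxu l]; ring
  have hlamEq : (1:ℂ) - lam = ↑γ * (↑ω/2) * ↑τ := by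
    have h2 : β * (1 - lam) = β * (↑γ * (↑ω/2) * ↑τ) := by
      calc β * (1 - lam) = ↑γ * (↑ω/2) * t * ((1-lam)⁻¹ * (1-lam)) := by rw [hβ]; ring
        _ = ↑γ * (↑ω/2) * t := by rw [inv_mul_cancel₀ h1lam, mul_one]
        _ = β * (↑γ * (↑ω/2) * ↑τ) := by rw [htβ]; ring
    exact mul_left_cancel₀ hβ0 h2
  have hlamval : lam = ((1 - γ * (ω/2) * τ : ℝ) : ℂ) := by
    push_cast
    linear_combination -hlamEq
  obtain ⟨hτpos, hbound⟩ := tau_bounds m hm ω hω d hd γ hγ u hu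
  constructor
  · rw [hlamval]; exact Complex.ofReal_im _
  · rw [hlamval, Complex.ofReal_re]
    constructor
    · nlinarith [mul_pos (mul_pos (neg_pos.mpr hγ) (by linarith : (0:ℝ) < ω/2)) hτpos]
    · rw [lt_div_iff₀ (by linarith : (0:ℝ) < 1 - ω)]
      nlinarith [mul_lt_mul_of_pos_left hbound hω0]


section CharpolyTools
open Polynomial

noncomputable abbrev Fq := FractionRing (Polynomial ℝ)

lemma charpoly_map_frac {I : Type*} [Fintype I] [DecidableEq I] (M : Matrix I I ℝ) :
    (algebraMap (Polynomial ℝ) Fq) M.charpoly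
      = Matrix.det (((algebraMap (Polynomial ℝ) Fq) X) • (1 : Matrix I I Fq)
          - M.map ((algebraMap (Polynomial ℝ) Fq).comp (C : ℝ →+* Polynomial ℝ))) := by
  rw [Matrix.charpoly, RingHom.map_det]
  congr 1
  ext i j
  by_cases hij : i = j
  · subst hij
    simp [Matrix.charmatrix_apply_eq, Matrix.map_apply, Matrix.one_apply_eq, Algebra.smul_def, smul_eq_mul, mul_one, Matrix.algebraMap_matrix_apply]
  · simp [Matrix.charmatrix_apply_ne _ _ _ hij, Matrix.map_apply, Matrix.one_apply_ne hij,
      Matrix.sub_apply, Matrix.smul_apply]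

lemma charpoly_shift {I J : Type*} [Fintype I] [Fintype J] [DecidableEq I] [DecidableEq J]
    (W : Matrix I J ℝ) (G : Matrix J I ℝ) :
    (X : Polynomial ℝ) ^ (Fintype.card J) * (W * G).charpoly
      = (X : Polynomial ℝ) ^ (Fintype.card I) * (G * W).charpoly := by
  have hinj : Function.Injective (algebraMap (Polynomial ℝ) Fq) := IsFractionRing.injective _ _
  apply hinj
  rw [_root_.map_mul, _root_.map_mul, map_pow, map_pow, charpoly_map_frac, charpoly_map_frac]
  rw [show (W * G).map ((algebraMap (Polynomial ℝ) Fq).comp C)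
      = W.map ((algebraMap (Polynomial ℝ) Fq).comp C)
        * G.map ((algebraMap (Polynomial ℝ) Fq).comp C) from Matrix.map_mul]
  rw [show (G * W).map ((algebraMap (Polynomial ℝ) Fq).comp C)
      = G.map ((algebraMap (Polynomial ℝ) Fq).comp C)
        * W.map ((algebraMap (Polynomial ℝ) Fq).comp C) from Matrix.map_mul]
  set x : Fq := algebraMap (Polynomial ℝ) Fq X with hxdef
  set W' := W.map ((algebraMap (Polynomial ℝ) Fq).comp C) with hW'
  set G' := G.map ((algebraMap (Polynomial ℝ) Fq).comp C) with hG'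
  have hx : x ≠ 0 := fun h => Polynomial.X_ne_zero (hinj (by rw [map_zero]; exact h))
  set A' := x⁻¹ • W' with hA'
  have hxA : x • A' = W' := by rw [hA', smul_smul, mul_inv_cancel₀ hx, one_smul]
  have h1 : x • ((1 : Matrix I I Fq) - A' * G') = x • 1 - W' * G' := by
    rw [smul_sub, ← Matrix.smul_mul, hxA]
  have h2 : x • ((1 : Matrix J J Fq) - G' * A') = x • 1 - G' * W' := by
    rw [smul_sub, ← Matrix.mul_smul, hxA]
  rw [← h1, ← h2, Matrix.det_smul, Matrix.det_smul, Matrix.det_one_sub_mul_comm]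
  ring

lemma charpoly_dvd_of_factor {I J : Type*} [Fintype I] [Fintype J] [DecidableEq I] [DecidableEq J]
    (hcard : Fintype.card J ≤ Fintype.card I) (W : Matrix I J ℝ) (G : Matrix J I ℝ) :
    (X : Polynomial ℝ) ^ (Fintype.card I - Fintype.card J) ∣ (W * G).charpoly := by
  have h := charpoly_shift W G
  have hsplit : (X : Polynomial ℝ) ^ (Fintype.card I)
      = X ^ (Fintype.card J) * X ^ (Fintype.card I - Fintype.card J) := by
    rw [← pow_add, Nat.add_sub_cancel' hcard]
  rw [hsplit, mul_assoc] at h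
  have h2 := mul_left_cancel₀ (pow_ne_zero _ (Polynomial.X_ne_zero)) h
  exact ⟨(G * W).charpoly, h2⟩

lemma charpoly_one_add_dvd {I : Type*} [Fintype I] [DecidableEq I]
    (N : Matrix I I ℝ) (e : ℕ) (hdvd : (X : Polynomial ℝ) ^ e ∣ N.charpoly) :
    ((X : Polynomial ℝ) - 1) ^ e ∣ (1 + N).charpoly := by
  set φ : Polynomial ℝ →+* Polynomial ℝ :=
    Polynomial.eval₂RingHom (C : ℝ →+* Polynomial ℝ) (X - 1) with hφ
  have hφX : φ X = X - 1 := by simp [hφ]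
  have hφC : ∀ a : ℝ, φ (C a) = C a := fun a => by simp [hφ]
  have hmap : (Matrix.charmatrix N).map φ = Matrix.charmatrix (1 + N) := by
    ext i j
    by_cases hij : i = j
    · subst hij
      rw [Matrix.map_apply, Matrix.charmatrix_apply_eq, Matrix.charmatrix_apply_eq]
      rw [map_sub, hφX, hφC]
      have : ((1 + N) i i) = 1 + N i i := by simp [Matrix.add_apply, Matrix.one_apply_eq]
      rw [this, map_add, C_1]
      ring
    · rw [Matrix.map_apply, Matrix.charmatrix_apply_ne _ _ _ hij,
        Matrix.charmatrix_apply_ne _ _ _ hij]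
      have : ((1 + N) i j) = N i j := by simp [Matrix.add_apply, Matrix.one_apply_ne hij]
      rw [this, map_neg, hφC]
  have hdet : (1 + N).charpoly = φ N.charpoly := by
    have hh := RingHom.map_det φ N.charmatrix
    rw [RingHom.mapMatrix_apply] at hh
    rw [Matrix.charpoly, Matrix.charpoly, ← hmap]
    exact hh.symm
  obtain ⟨g, hg⟩ := hdvd
  rw [hdet, hg, _root_.map_mul, map_pow, hφX]
  exact ⟨φ g, rfl⟩


end CharpolyTools

lemma mapC_mul {α β γ : Type*} [Fintype β] (M : Matrix α β ℝ) (N : Matrix β γ ℝ) :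
    (M * N).map Complex.ofReal = M.map Complex.ofReal * N.map Complex.ofReal := by
  ext i j
  simp only [Matrix.map_apply, Matrix.mul_apply]
  push_cast
  rfl

open Polynomial Kronecker in
theorem stmt10 (m n : ℕ) (hm : 1 ≤ m) (hn : 1 ≤ n) (d : Fin m → ℝ) (hd : ∀ j, 0 < d j)
    (ω : ℝ) (hω : ω ∈ Set.Ioo (0 : ℝ) 1)
    (K Q : Matrix (Fin n) (Fin n) ℝ) (Γ : Fin n → ℝ) (hQ : IsUnit Q)
    (hΓ : ∀ j, Γ j < 0) (hK : K = Q * Matrix.diagonal Γ * Q⁻¹) :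
    let D : Matrix (Fin m) (Fin m) ℝ := Matrix.diagonal d
    let Sω : Matrix (Fin m) (Fin m) ℝ :=
      IinvMat m - (ω / 2) • Matrix.vecMulVec (eVec m) (eVec m)
    let A : Matrix (Fin m × Fin n) (Fin m × Fin n) ℝ := 1 - (IinvMat m * D) ⊗ₖ K
    let P : Matrix (Fin m × Fin n) (Fin m × Fin n) ℝ := 1 - (Sω * D) ⊗ₖ K
    IsUnit P ∧
      ((X - 1) ^ (n * (m - 1)) ∣ (P⁻¹ * A).charpoly) ∧
      ∀ (lam : ℂ) (ξ : Fin m × Fin n → ℂ), ξ ≠ 0 →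
        ((P⁻¹ * A).map Complex.ofReal).mulVec ξ = lam • ξ →
        lam.im = 0 ∧ lam.re ∈ Set.Ico (1 : ℝ) (1 / (1 - ω)) := by
  intro D Sω A P
  have hD : D = Matrix.diagonal d := rfl
  have hSω : Sω = SomMat m ω := rfl
  have hA : A = 1 - (IinvMat m * Matrix.diagonal d) ⊗ₖ K := rfl
  have hP : P = 1 - (SomMat m ω * Matrix.diagonal d) ⊗ₖ K := rfl
  have hω0 := hω.1
  have hω1 := hω.2
  -- Part 1 : P is invertible
  have hPdet : P.det ≠ 0 := by
    intro h0
    obtain ⟨v, hv, hmv⟩ := Matrix.exists_mulVec_eq_zero_iff.mpr h0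
    rw [hP, Matrix.sub_mulVec, Matrix.one_mulVec] at hmv
    have hpt : ∀ k i, v (k, i)
        = ∑ l, ∑ j, (SomMat m ω * Matrix.diagonal d) k l * K i j * v (l, j) := by
      intro k i
      have h1 := congrFun hmv (k, i)
      simp only [Pi.sub_apply, Pi.zero_apply, sub_eq_zero] at h1
      rw [h1]
      simp only [Matrix.mulVec, dotProduct, Matrix.kroneckerMap_apply,
        Fintype.sum_prod_type]
      try exact Finset.sum_congr rfl fun l _ => Finset.sum_congr rfl fun j _ => by ring
    have hξ : (fun p : Fin m × Fin n => ((v p : ℝ) : ℂ)) ≠ 0 := by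
      intro h'
      apply hv
      funext p
      have := congrFun h' p
      simp only [Pi.zero_apply] at this ⊢
      exact_mod_cast this
    obtain ⟨j, x, hx0, hxeq⟩ := block_reduce m n K Q Γ hQ hK
      (SomMat m ω * Matrix.diagonal d) (SomMat m ω * Matrix.diagonal d) 1 0 _ hξ
      (fun k i => by
        have := hpt k i
        push_cast
        rw [zero_mul, one_mul, sub_eq_zero]
        exact_mod_cast this)
    apply hx0
    refine inj_aux m ω hω d hd (Γ j) (hΓ j) x fun k => ?_
    have h2 := hxeq k
    rw [zero_mul, one_mul, sub_eq_zero] at h2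
    rw [h2, Finset.mul_sum, Finset.mul_sum]
    refine Finset.sum_congr rfl fun l _ => ?_
    rw [Matrix.mul_diagonal]
    push_cast
    ring
  have hPunit : IsUnit P := (Matrix.isUnit_iff_isUnit_det P).mpr (isUnit_iff_ne_zero.mpr hPdet)
  have hPdetunit : IsUnit P.det := isUnit_iff_ne_zero.mpr hPdet
  refine ⟨hPunit, ?_, ?_⟩
  -- Part 2 : divisibility of the characteristic polynomial
  · set F₀ : Matrix (Fin m × Fin n) (Fin n) ℝ := Matrix.of fun p j => K p.2 j with hF₀
    set G₀ : Matrix (Fin n) (Fin m × Fin n) ℝ :=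
      Matrix.of fun i q => if i = q.2 then -(ω/2) * d q.1 else 0 with hG₀
    have hAP : A - P = F₀ * G₀ := by
      have hstep : A - P = (SomMat m ω * Matrix.diagonal d) ⊗ₖ K
          - (IinvMat m * Matrix.diagonal d) ⊗ₖ K := by
        rw [hA, hP]; abel
      rw [hstep]
      ext p q
      obtain ⟨k, i⟩ := p
      obtain ⟨l, j⟩ := q
      rw [Matrix.sub_apply, Matrix.kroneckerMap_apply, Matrix.kroneckerMap_apply,
        Matrix.mul_diagonal, Matrix.mul_diagonal, SomMat_apply, Matrix.mul_apply]
      simp only [hF₀, hG₀, Matrix.of_apply, mul_ite, mul_zero, Finset.sum_ite_eq',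
        Finset.mem_univ, if_true]
      ring
    have hN : P⁻¹ * A - 1 = (P⁻¹ * F₀) * G₀ := by
      rw [Matrix.mul_assoc, ← hAP]
      calc P⁻¹ * A - 1 = P⁻¹ * A - P⁻¹ * P := by
            rw [Matrix.nonsing_inv_mul P hPdetunit]
        _ = P⁻¹ * (A - P) := by rw [← Matrix.mul_sub]
    have hcard : Fintype.card (Fin n) ≤ Fintype.card (Fin m × Fin n) := by
      simp only [Fintype.card_fin, Fintype.card_prod]
      exact Nat.le_mul_of_pos_left n (by omega)
    have hdvd0 := charpoly_dvd_of_factor hcard (P⁻¹ * F₀) G₀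
    have hdvd1 := charpoly_one_add_dvd ((P⁻¹ * F₀) * G₀) _ hdvd0
    rw [← hN] at hdvd1
    have hone : 1 + (P⁻¹ * A - 1) = P⁻¹ * A := by abel
    rw [hone] at hdvd1
    have hexp : Fintype.card (Fin m × Fin n) - Fintype.card (Fin n) = n * (m - 1) := by
      simp only [Fintype.card_fin, Fintype.card_prod]
      rw [mul_comm n (m-1), Nat.sub_mul, one_mul]
    rw [hexp] at hdvd1
    exact hdvd1
  -- Part 3 : location of the eigenvalues
  · intro lam ξ hξ heig
    by_cases hlam : lam = 1
    · subst hlam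
      refine ⟨Complex.one_im, ?_⟩
      rw [Complex.one_re]
      refine ⟨le_refl 1, ?_⟩
      rw [lt_div_iff₀ (by linarith : (0:ℝ) < 1 - ω)]
      linarith
    · have hPP : P.map Complex.ofReal * (P⁻¹ * A).map Complex.ofReal
          = A.map Complex.ofReal := by
        rw [← mapC_mul, ← Matrix.mul_assoc, Matrix.mul_nonsing_inv P hPdetunit, Matrix.one_mul]
      have heq : (A.map Complex.ofReal).mulVec ξ
          = lam • (P.map Complex.ofReal).mulVec ξ := by
        calc (A.map Complex.ofReal).mulVec ξ
            = (P.map Complex.ofReal * (P⁻¹ * A).map Complex.ofReal).mulVec ξ := by rw [hPP]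
          _ = (P.map Complex.ofReal).mulVec (((P⁻¹ * A).map Complex.ofReal).mulVec ξ) :=
              (Matrix.mulVec_mulVec _ _ _).symm
          _ = (P.map Complex.ofReal).mulVec (lam • ξ) := by rw [heig]
          _ = lam • (P.map Complex.ofReal).mulVec ξ := Matrix.mulVec_smul _ _ _
      have hpt : ∀ k i,
          (1:ℂ) * ξ (k,i) - ∑ l, ∑ j, ((IinvMat m * Matrix.diagonal d) k l : ℂ)
              * (K i j : ℂ) * ξ (l,j)
            = lam * (ξ (k,i) - ∑ l, ∑ j, ((SomMat m ω * Matrix.diagonal d) k l : ℂ)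
              * (K i j : ℂ) * ξ (l,j)) := by
        intro k i
        have h1 := congrFun heq (k, i)
        rw [hA, hP] at h1
        have hmapA : ((1 - (IinvMat m * Matrix.diagonal d) ⊗ₖ K).map Complex.ofReal)
            = 1 - ((IinvMat m * Matrix.diagonal d) ⊗ₖ K).map Complex.ofReal := by
          rw [Matrix.map_sub, Matrix.map_one _ Complex.ofReal_zero Complex.ofReal_one]
          exact fun a₁ a₂ => Complex.ofReal_sub a₁ a₂
        have hmapP : ((1 - (SomMat m ω * Matrix.diagonal d) ⊗ₖ K).map Complex.ofReal)
            = 1 - ((SomMat m ω * Matrix.diagonal d) ⊗ₖ K).map Complex.ofReal := by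
          rw [Matrix.map_sub, Matrix.map_one _ Complex.ofReal_zero Complex.ofReal_one]
          exact fun a₁ a₂ => Complex.ofReal_sub a₁ a₂
        rw [hmapA, hmapP, Matrix.sub_mulVec, Matrix.sub_mulVec, Matrix.one_mulVec] at h1
        simp only [Pi.sub_apply, Pi.smul_apply, smul_eq_mul] at h1
        rw [one_mul]
        have hexp1 : ∀ (M : Matrix (Fin m) (Fin m) ℝ),
            ((M ⊗ₖ K).map Complex.ofReal).mulVec ξ (k,i)
              = ∑ l, ∑ j, (M k l : ℂ) * (K i j : ℂ) * ξ (l,j) := by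
          intro M
          simp only [Matrix.mulVec, dotProduct, Matrix.map_apply,
            Matrix.kroneckerMap_apply, Fintype.sum_prod_type]
          refine Finset.sum_congr rfl fun l _ => Finset.sum_congr rfl fun j _ => ?_
          push_cast
          ring
        rw [hexp1, hexp1] at h1
        exact h1
      obtain ⟨j, x, hx0, hxeq⟩ := block_reduce m n K Q Γ hQ hK
        (IinvMat m * Matrix.diagonal d) (SomMat m ω * Matrix.diagonal d) 1 lam ξ hξ hpt
      refine core_eig m hm ω hω d hd (Γ j) (hΓ j) lam hlam x hx0 fun k => ?_
      have := hxeq k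
      rw [one_mul] at this
      exact this
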